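/- For a finite group G, the sum over all triples of irreducible complex characters (ρ, φ, ψ) of the square of the Kronecker multiplicity g(ρ,φ,ψ) = ⟨ρ·φ·ψ̄, 1⟩ equals the sum over conjugacy classes α of G of the centralizer size z_α = |C_G(x)| for x ∈ α. -/

import Mathlib

open Complex

noncomputable def charInner (G : Type) [Group G] [Fintype G] (φ ψ : G → ℂ) : ℂ :=
  (Fintype.card G : ℂ)⁻¹ * ∑ x : G, φ x * (starRingEnd ℂ) (ψ x)

/-- `χ` is the character of some irreducible complex representation of `G`. -/
def IsIrrChar (G : Type) [Group G] (χ : G → ℂ) : Prop :=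
  ∃ V : FDRep ℂ G, CategoryTheory.Simple V ∧ χ = V.character

/-- Kronecker multiplicity `g(ρ,φ,ψ) = ⟨φ·ψ, ρ⟩`. -/
noncomputable def kron (G : Type) [Group G] [Fintype G] (ρ φ ψ : G → ℂ) : ℂ :=
  charInner G (fun x => φ x * ψ x) ρ

/-!
Expanding `g(ρ,φ,ψ)²` as a double sum over `x, y ∈ G` (the second copy reindexed by `y ↦ y⁻¹`)
and summing over the characters first turns the left-hand side into
`|G|⁻² ∑_{x,y} c(x,y)² · conj c(x,y)` with `c(x,y) = ∑_χ χ(x) χ(y⁻¹)`. Column orthogonality says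
`c(x,y) = |C_G(x)|` if `x ~ y` and `0` otherwise, so the sum is
`|G|⁻² ∑_x |x^G| |C_G(x)|³ = |G|⁻¹ ∑_x |C_G(x)|² = ∑_α z_α`.

Column orthogonality follows from completeness of the irreducible characters: for a class function
`f` orthogonal to all of them, `∑_g f(g) g ∈ ℂ[G]` acts on each simple `ℂ[G]`-module by a scalar
(Schur) of trace zero, so it annihilates every simple module and vanishes because `ℂ[G]` is
semisimple.
-/

open MonoidAlgebra Subgroup

universe u

theorem IsConj.inv {G : Type*} [Group G] {a b : G} (h : IsConj a b) : IsConj a⁻¹ b⁻¹ := by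
  obtain ⟨c, rfl⟩ := isConj_iff.1 h
  exact isConj_iff.2 ⟨c, conj_inv.symm⟩

section ConjClasses

variable {G : Type*} [Group G]

theorem ConjClasses.nat_card_carrier_mul_nat_card_centralizer [Finite G] (x : G) :
    Nat.card (ConjClasses.mk x).carrier * Nat.card (centralizer {x}) = Nat.card G := by
  rw [← ConjAct.orbit_eq_carrier_conjClasses, nat_card_centralizer_nat_card_stabilizer,
    Nat.card_coe_set_eq, ← MulAction.index_stabilizer, index_mul_card]
  exact Nat.card_congr ConjAct.toConjAct.symm.toEquiv

theorem nat_card_centralizer_eq_of_isConj [Finite G] {x y : G} (h : IsConj x y) :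
    Nat.card (centralizer {x}) = Nat.card (centralizer {y}) := by
  have hx := ConjClasses.nat_card_carrier_mul_nat_card_centralizer x
  rw [ConjClasses.mk_eq_mk_iff_isConj.2 h,
    ← ConjClasses.nat_card_carrier_mul_nat_card_centralizer y] at hx
  have : Nonempty (ConjClasses.mk y).carrier := ⟨⟨y, ConjClasses.mem_carrier_mk⟩⟩
  exact Nat.eq_of_mul_eq_mul_left Nat.card_pos hx

variable [Fintype G] [DecidableEq G] {M : Type*} [AddCommMonoid M]

theorem card_filter_isConj (x : G) :
    (Finset.univ.filter (IsConj x)).card = Nat.card (ConjClasses.mk x).carrier := by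
  rw [← Fintype.card_subtype, ← Nat.card_eq_fintype_card]
  exact Nat.card_congr <| Equiv.subtypeEquivRight fun y => by
    rw [ConjClasses.mem_carrier_iff_mk_eq, ConjClasses.mk_eq_mk_iff_isConj, isConj_comm]

theorem sum_ite_isConj (x : G) (h : G → M) (hh : ∀ x y, IsConj x y → h x = h y) :
    ∑ y, (if IsConj x y then h y else 0) = Nat.card (ConjClasses.mk x).carrier • h x := by
  rw [← Finset.sum_filter, Finset.sum_congr rfl fun y hy =>
    (hh x y (Finset.mem_filter.1 hy).2).symm, Finset.sum_const, card_filter_isConj]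

theorem sum_eq_sum_conjClasses (h : G → M) (hh : ∀ x y, IsConj x y → h x = h y) :
    ∑ x, h x = ∑ α : ConjClasses G, Nat.card α.carrier • h (Quotient.out α) := by
  rw [← Finset.sum_fiberwise Finset.univ ConjClasses.mk]
  refine Finset.sum_congr rfl fun α _ => ?_
  have hα : ConjClasses.mk (Quotient.out α) = α := Quotient.out_eq α
  calc ∑ x ∈ Finset.univ.filter (ConjClasses.mk · = α), h x
      = ∑ x, if IsConj (Quotient.out α) x then h x else 0 := by
        rw [Finset.sum_filter]
        refine Finset.sum_congr rfl fun x _ => if_congr ?_ rfl rfl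
        rw [isConj_comm, ← ConjClasses.mk_eq_mk_iff_isConj, hα]
    _ = Nat.card α.carrier • h (Quotient.out α) := by
      rw [sum_ite_isConj _ h hh, hα]

theorem sum_nat_card_centralizer_sq :
    ∑ x : G, Nat.card (centralizer {x}) ^ 2 =
      Nat.card G * ∑ α : ConjClasses G, Nat.card (centralizer {Quotient.out α}) := by
  rw [sum_eq_sum_conjClasses _ fun x y h => by rw [nat_card_centralizer_eq_of_isConj h],
    Finset.mul_sum]
  refine Fintype.sum_congr _ _ fun α => ?_
  have hα := ConjClasses.nat_card_carrier_mul_nat_card_centralizer (Quotient.out α)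
  rw [show ConjClasses.mk (Quotient.out α) = α from Quotient.out_eq α] at hα
  rw [smul_eq_mul, ← hα]
  ring

theorem sum_sum_ite_isConj_nat_card_centralizer_pow_three :
    ∑ x : G, ∑ y : G, (if IsConj x y then Nat.card (centralizer {x}) ^ 3 else 0) =
      Nat.card G ^ 2 * ∑ α : ConjClasses G, Nat.card (centralizer {Quotient.out α}) := by
  calc _ = ∑ x : G, Nat.card G * Nat.card (centralizer {x}) ^ 2 :=
        Fintype.sum_congr _ _ fun x => by
          rw [sum_ite_isConj x _ fun _ _ _ => rfl, smul_eq_mul,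
            ← ConjClasses.nat_card_carrier_mul_nat_card_centralizer x]
          ring
    _ = _ := by rw [← Finset.mul_sum, sum_nat_card_centralizer_sq, ← mul_assoc, sq]

end ConjClasses

theorem IsSemisimpleRing.eq_zero_of_forall_smul_eq_zero {R : Type u} [Ring R]
    [IsSemisimpleRing R] {a : R}
    (h : ∀ (M : Type u) [AddCommGroup M] [Module R M], IsSimpleModule R M →
      ∀ x : M, a • x = 0) :
    a = 0 := by
  suffices a ∈ Ring.jacobson R by rwa [IsSemisimpleRing.jacobson_eq_bot] at this
  rw [Ring.jacobson_eq_sInf_isMaximal, Submodule.mem_sInf]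
  intro I hI
  have := h (R ⧸ I) (isSimpleModule_iff_isCoatom.2 (Ideal.isMaximal_def.1 hI))
    (Submodule.Quotient.mk 1)
  rwa [← Submodule.Quotient.mk_smul, smul_eq_mul, mul_one, Submodule.Quotient.mk_eq_zero] at this

namespace Representation

variable {k G V : Type*} [Field k] [Group G] [AddCommGroup V] [Module k V]

theorem exists_sum_smul_eq_smul_one [Fintype G] [IsAlgClosed k] [FiniteDimensional k V]
    (ρ : Representation k G V) [IsIrreducible ρ] {f : G → k}
    (hf : ∀ g h, IsConj g h → f g = f h) :
    ∃ c : k, ∑ g, f g • ρ g = c • 1 := by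
  set T := ∑ g, f g • ρ g
  have hT : ∀ h, T * ρ h = ρ h * T := fun h => calc
    T * ρ h = ∑ g, f g • ρ (g * h) := by
      simp only [T, Finset.sum_mul, smul_mul_assoc, map_mul]
    _ = ∑ g, f (h * g * h⁻¹) • ρ (h * g * h⁻¹ * h) :=
      (Fintype.sum_equiv (MulAut.conj h).toEquiv _ _ fun g => by simp).symm
    _ = ρ h * T := by
      simp [T, ← hf _ _ (isConj_iff.2 ⟨h, rfl⟩), Finset.mul_sum]
  obtain ⟨c, hc⟩ := IsIrreducible.algebraMap_intertwiningMap_bijective_of_isAlgClosed.2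
    (T.intertwiningMap_of_isIntertwiningMap ρ ρ fun h v => LinearMap.congr_fun (hT h) v)
  exact ⟨c, LinearMap.ext fun v => (congrArg (fun F : IntertwiningMap ρ ρ => F v) hc).symm⟩

theorem sum_smul_eq_zero_of_sum_mul_character_eq_zero [Fintype G] [IsAlgClosed k] [CharZero k]
    [FiniteDimensional k V] (ρ : Representation k G V) [IsIrreducible ρ] {f : G → k}
    (hf : ∀ g h, IsConj g h → f g = f h) (h0 : ∑ g, f g * ρ.character g = 0) :
    ∑ g, f g • ρ g = 0 := by
  obtain ⟨c, hc⟩ := exists_sum_smul_eq_smul_one ρ hf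
  have : Nontrivial V := IsSimpleModule.nontrivial k[G] ρ.asModule
  have htrace : c * Module.finrank k V = 0 := by
    have := congrArg (LinearMap.trace k V) hc
    simp only [map_sum, map_smul, LinearMap.trace_one, smul_eq_mul] at this
    rw [← this]
    exact h0
  rw [hc, (mul_eq_zero.1 htrace).resolve_right (Nat.cast_ne_zero.2 Module.finrank_pos.ne'),
    zero_smul]

variable {M : Type*} [AddCommGroup M] [Module k M] [Module k[G] M] [IsScalarTower k k[G] M]

theorem asAlgebraHom_ofModule'_apply (a : k[G]) (x : M) :
    (ofModule' M).asAlgebraHom a x = a • x := by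
  simp [asAlgebraHom_def, ofModule']

theorem isIrreducible_ofModule' [IsSimpleModule k[G] M] :
    (ofModule' (k := k) (G := G) M).IsIrreducible := by
  rw [irreducible_iff_isSimpleModule_asModule]
  exact IsSimpleModule.congr
    { (ofModule' M).asModuleEquiv with
      map_smul' := fun a x => by simp [asAlgebraHom_ofModule'_apply] }

end Representation

theorem eq_zero_of_forall_sum_mul_character_eq_zero {k G : Type u} [Field k] [IsAlgClosed k]
    [CharZero k] [Group G] [Fintype G] {f : G → k} (hf : ∀ g h, IsConj g h → f g = f h)
    (h : ∀ (V : Type u) [AddCommGroup V] [Module k V] [FiniteDimensional k V]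
      (ρ : Representation k G V), ρ.IsIrreducible → ∑ g, f g * ρ.character g = 0) :
    f = 0 := by
  set a : k[G] := ∑ g, single g (f g)
  have ha : a = 0 := by
    refine IsSemisimpleRing.eq_zero_of_forall_smul_eq_zero fun M _ _ hM x => ?_
    let : Module k M := .compHom M (algebraMap k k[G])
    have : IsScalarTower k k[G] M := .of_compHom k k[G] M
    have : FiniteDimensional k M := Module.Finite.trans k[G] M
    have : (Representation.ofModule' (k := k) (G := G) M).IsIrreducible :=
      Representation.isIrreducible_ofModule'
    have := Representation.sum_smul_eq_zero_of_sum_mul_character_eq_zero _ hf (h M _ this)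
    rw [← Representation.asAlgebraHom_ofModule'_apply]
    simpa [a, map_sum, Representation.asAlgebraHom_single] using LinearMap.congr_fun this x
  funext g
  classical
  simpa [a, MonoidAlgebra.coeff_sum, Finsupp.single_apply] using
    congrArg (fun b : k[G] => b.coeff g) ha

theorem FDRep.simple_of_isIrreducible {k G V : Type u} [Field k] [IsAlgClosed k] [CharZero k]
    [Group G] [Fintype G] [AddCommGroup V] [Module k V] [FiniteDimensional k V]
    (ρ : Representation k G V) [ρ.IsIrreducible] :
    CategoryTheory.Simple (FDRep.of ρ) := by
  have hG : (Nat.card G : k) ≠ 0 := Nat.cast_ne_zero.2 Nat.card_pos.ne'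
  have := invertibleOfNonzero hG
  have h := Representation.char_orthonormal ρ ρ
  rw [if_pos ⟨Representation.Equiv.refl ρ⟩, inv_mul_eq_one₀ hG] at h
  exact (FDRep.simple_iff_char_is_norm_one _).2 h.symm

section IsIrrChar

variable {G : Type} [Group G]

theorem IsIrrChar.apply_eq_of_isConj {χ : G → ℂ} (hχ : IsIrrChar G χ) {g h : G}
    (hgh : IsConj g h) : χ g = χ h := by
  obtain ⟨V, -, rfl⟩ := hχ
  obtain ⟨c, rfl⟩ := isConj_iff.1 hgh
  exact (FDRep.char_conj V g c).symm

variable [Fintype G]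

theorem IsIrrChar.of_isIrreducible {V : Type} [AddCommGroup V] [Module ℂ V]
    [FiniteDimensional ℂ V] (ρ : Representation ℂ G V) [ρ.IsIrreducible] :
    IsIrrChar G ρ.character :=
  ⟨FDRep.of ρ, FDRep.simple_of_isIrreducible ρ, rfl⟩

theorem IsIrrChar.sum_mul_inv [DecidableEq (G → ℂ)] {χ ψ : G → ℂ} (hχ : IsIrrChar G χ)
    (hψ : IsIrrChar G ψ) :
    ∑ g, χ g * ψ g⁻¹ = if χ = ψ then (Fintype.card G : ℂ) else 0 := by
  obtain ⟨V, hV, rfl⟩ := hχ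
  obtain ⟨W, hW, rfl⟩ := hψ
  split_ifs with h
  · rw [h, (FDRep.simple_iff_char_is_norm_one W).1 hW, Nat.card_eq_fintype_card]
  · have := FDRep.char_orthonormal V W
    rw [if_neg fun ⟨i⟩ => h (FDRep.char_iso i)] at this
    simpa [Nat.card_pos.ne'] using this

theorem eq_zero_of_forall_isIrrChar_sum_mul_inv_eq_zero {f : G → ℂ}
    (hf : ∀ g h, IsConj g h → f g = f h) (h : ∀ χ, IsIrrChar G χ → ∑ g, f g * χ g⁻¹ = 0) :
    f = 0 := by
  have := eq_zero_of_forall_sum_mul_character_eq_zero (f := fun g => f g⁻¹)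
    (fun g h hgh => hf _ _ hgh.inv) fun V _ _ _ ρ _ => by
      rw [← h _ (IsIrrChar.of_isIrreducible ρ)]
      exact Fintype.sum_equiv (Equiv.inv G) _ _ fun g => by simp
  funext g
  simpa using congrFun this g⁻¹

theorem sum_isIrrChar_mul_inv [DecidableEq G] (s : Finset (G → ℂ))
    (hs : ∀ χ, χ ∈ s ↔ IsIrrChar G χ) (x y : G) :
    ∑ χ ∈ s, χ x * χ y⁻¹ = if IsConj x y then (Nat.card (centralizer {x}) : ℂ) else 0 := by
  classical
  set z : G → ℂ := fun x => Nat.card (centralizer {x})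
  have hz : ∀ x x', IsConj x x' → z x = z x' := fun _ _ h =>
    congrArg Nat.cast (nat_card_centralizer_eq_of_isConj h)
  -- the difference of the two sides is a class function orthogonal to every irreducible character
  suffices (fun x => ∑ χ ∈ s, χ x * χ y⁻¹ - if IsConj x y then z x else 0) = 0 from
    sub_eq_zero.1 (congrFun this x)
  refine eq_zero_of_forall_isIrrChar_sum_mul_inv_eq_zero (fun g h hgh => ?_) fun χ₀ hχ₀ => ?_
  · rw [Finset.sum_congr rfl fun χ hχ => by rw [((hs χ).1 hχ).apply_eq_of_isConj hgh],
      hz g h hgh, if_congr ⟨hgh.symm.trans, hgh.trans⟩ rfl rfl]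
  have hχ₀' : ∀ g h, IsConj g h → z g * χ₀ g⁻¹ = z h * χ₀ h⁻¹ := fun g h hgh => by
    rw [hz g h hgh, hχ₀.apply_eq_of_isConj hgh.inv]
  calc ∑ g, (∑ χ ∈ s, χ g * χ y⁻¹ - if IsConj g y then z g else 0) * χ₀ g⁻¹
      = ∑ χ ∈ s, χ y⁻¹ * ∑ g, χ g * χ₀ g⁻¹ - ∑ g, if IsConj y g then z g * χ₀ g⁻¹ else 0 := by
        simp only [sub_mul, Finset.sum_sub_distrib, Finset.sum_mul, Finset.mul_sum, ite_mul,
          zero_mul, isConj_comm (g := y)]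
        rw [Finset.sum_comm]
        congr 1
        exact Finset.sum_congr rfl fun _ _ => Finset.sum_congr rfl fun _ _ => by ring
    _ = χ₀ y⁻¹ * Fintype.card G - Nat.card (ConjClasses.mk y).carrier • (z y * χ₀ y⁻¹) := by
        rw [sum_ite_isConj y _ hχ₀', Finset.sum_congr rfl fun χ hχ => by
          rw [((hs χ).1 hχ).sum_mul_inv hχ₀, mul_ite, mul_zero], Finset.sum_ite_eq' s χ₀,
          if_pos ((hs χ₀).2 hχ₀)]
    _ = 0 := by
        rw [nsmul_eq_mul, ← mul_assoc, mul_comm (χ₀ y⁻¹), ← Nat.cast_mul,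
          ConjClasses.nat_card_carrier_mul_nat_card_centralizer, Nat.card_eq_fintype_card,
          sub_self]

end IsIrrChar

theorem sum_kron_sq {G : Type} [Group G] [Fintype G] (s : Finset (G → ℂ)) :
    ∑ ρ ∈ s, ∑ φ ∈ s, ∑ ψ ∈ s, kron G ρ φ ψ ^ 2 =
      ((Fintype.card G : ℂ)⁻¹) ^ 2 * ∑ x, ∑ y,
        (∑ χ ∈ s, χ x * χ y⁻¹) ^ 2 * starRingEnd ℂ (∑ χ ∈ s, χ x * χ y⁻¹) := by
  have hsq : ∀ ρ φ ψ, kron G ρ φ ψ ^ 2 = ((Fintype.card G : ℂ)⁻¹) ^ 2 * ∑ x, ∑ y,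
      (φ x * φ y⁻¹) * (ψ x * ψ y⁻¹) * starRingEnd ℂ (ρ x * ρ y⁻¹) := fun ρ φ ψ => by
    have hinv : kron G ρ φ ψ = (Fintype.card G : ℂ)⁻¹ *
        ∑ y, φ y⁻¹ * ψ y⁻¹ * starRingEnd ℂ (ρ y⁻¹) := by
      rw [kron, charInner, ← Equiv.sum_comp (Equiv.inv G)]
      rfl
    rw [sq]
    nth_rw 2 [hinv]
    rw [kron, charInner, mul_mul_mul_comm, Finset.sum_mul_sum, sq]
    congr 1
    exact Fintype.sum_congr _ _ fun x => Fintype.sum_congr _ _ fun y => by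
      simp only [map_mul]
      ring
  simp only [hsq, ← Finset.mul_sum]
  congr 1
  simp only [Finset.sum_comm (s := s) (t := (Finset.univ : Finset G))]
  refine Fintype.sum_congr _ _ fun x => Fintype.sum_congr _ _ fun y => ?_
  simp only [sq, map_sum, Finset.sum_mul, Finset.mul_sum]
  exact Finset.sum_congr rfl fun _ _ => Finset.sum_comm

theorem stmt0 (G : Type) [Group G] [Fintype G] [DecidableEq G]
    (s : Finset (G → ℂ)) (hs : ∀ χ, χ ∈ s ↔ IsIrrChar G χ) :
    ∑ ρ ∈ s, ∑ φ ∈ s, ∑ ψ ∈ s, (kron G ρ φ ψ) ^ 2 =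
      ∑ α : ConjClasses G,
        (Nat.card (Subgroup.centralizer {Quotient.out α} : Subgroup G) : ℂ) := by
  set N : ℂ := (Fintype.card G : ℂ)
  set z : G → ℂ := fun x => Nat.card (centralizer {x})
  have hN : N ≠ 0 := Nat.cast_ne_zero.2 Fintype.card_ne_zero
  calc ∑ ρ ∈ s, ∑ φ ∈ s, ∑ ψ ∈ s, (kron G ρ φ ψ) ^ 2
      = N⁻¹ ^ 2 * ∑ x, ∑ y, if IsConj x y then z x ^ 3 else 0 := by
        rw [sum_kron_sq]
        refine congrArg (N⁻¹ ^ 2 * ·) <| Fintype.sum_congr _ _ fun x =>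
          Fintype.sum_congr _ _ fun y => ?_
        rw [sum_isIrrChar_mul_inv s hs]
        split_ifs <;> simp [z, pow_succ]
    _ = N⁻¹ ^ 2 * (N ^ 2 * ∑ α : ConjClasses G, z (Quotient.out α)) := by
        have h := congrArg (Nat.cast : ℕ → ℂ)
          (sum_sum_ite_isConj_nat_card_centralizer_pow_three (G := G))
        push_cast [Nat.card_eq_fintype_card] at h
        rw [h]
    _ = ∑ α : ConjClasses G, z (Quotient.out α) := by
        field_simp
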